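/- arXiv:2012.06105 — 3 statements merged into one kernel-verified Lean document; each statement's English description precedes it below -/
import Mathlib

section
/- Let p be an odd prime, m an odd positive integer, and let Q : F_{p^m} → F_p be a quadratic form over F_p (F_{p^m} viewed as an F_p-vector space) of rank m, i.e. the associated bilinear form B(x,z) = Q(x+z) − Q(x) − Q(z) is nondegenerate. For b ∈ F_{p^m} and c ∈ F_p set N_{b,c} = #{x ∈ F_{p^m} : Q(x) + Tr(bx) = c}. Then, as (b,c) ranges over F_{p^m} × F_p: N_{b,c} = p^{m−1} for exactly p^m pairs (b,c); N_{b,c} = p^{m−1} − p^{(m−1)/2} for exactly (1/2)(p−1)p^m pairs; and N_{b,c} = p^{m−1} + p^{(m−1)/2} for exactly (1/2)(p−1)p^m pairs. -/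
/-!
Completing the square: the polar form of `Q` identifies `F_{p^m}` with its dual, so
`x ↦ Q x + Tr(bx)` is a translate of `Q` shifted by a constant, and `N_{b,c} = #{Q = c + c_b}`;
each value count over pairs `(b, c)` is therefore `p^m` times the count over `c` alone.

Diagonalising, `Q ≅ ∑ wᵢ xᵢ²` with all `wᵢ ≠ 0`. Level-set sizes of an orthogonal sum are
convolutions, and a binary form `a x² + b y²` takes the value `c` exactly `q + η(-ab) ν(c)`
times (`η` the quadratic character, `ν = q δ₀ - 1`; the cross term is a Jacobi sum).
Convolving with `q + ε ν` turns `A + B X` into `q² A + ε q B X` whenever `∑ X = 0`, so starting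
from one variable, in odd dimension `m` we get `#{Q = c} = q^{m-1} + η(d) η(c) q^{(m-1)/2}` with
`d ≠ 0`. The three values occur for `c = 0`, and for the `(q-1)/2` nonzero `c` with
`η(c) = ∓η(d)` each.
-/

noncomputable section
open scoped Classical

/-- The absolute trace map from `F_{p^m}` to `F_p`. -/
def tr (p m : ℕ) [Fact p.Prime] (x : GaloisField p m) : ZMod p :=
  Algebra.trace (ZMod p) (GaloisField p m) x

/-- `N_{b,c} = #{x ∈ F_{p^m} : Q(x) + Tr(bx) = c}`. -/
def Nbc (p m : ℕ) [Fact p.Prime] (Q : QuadraticForm (ZMod p) (GaloisField p m))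
    (b : GaloisField p m) (c : ZMod p) : ℕ :=
  Nat.card {x : GaloisField p m // Q x + tr p m (b * x) = c}

open Finset

section CharacterSums

variable {F : Type*} [Field F] [Fintype F]

local notation "q" => (Fintype.card F : ℤ)
local notation "η" => quadraticChar F

variable (F) in
/-- The function `v` of Lidl–Niederreiter. -/
def nu (s : F) : ℤ := (if s = 0 then q else 0) - 1

lemma sum_mul_nu_sub (f : F → ℤ) (c : F) : ∑ s, f s * nu F (c - s) = q * f c - ∑ s, f s := by
  simp only [nu, sub_eq_zero, mul_sub, mul_one, mul_ite, mul_zero, sum_sub_distrib, sum_ite_eq,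
    mem_univ, if_true, mul_comm (f c)]

lemma quadraticChar_inv (a : F) : η a⁻¹ = η a := by
  rw [← MulChar.inv_apply', (quadraticChar_isQuadratic F).inv]

lemma quadraticChar_mul_self {a : F} (ha : a ≠ 0) : η a * η a = 1 := by
  rw [← sq, quadraticChar_sq_one ha]

lemma sum_quadraticChar_sub (hF : ringChar F ≠ 2) (c : F) : ∑ s, η (c - s) = 0 :=
  (Equiv.sum_comp (Equiv.subLeft c) fun s => η s).trans (quadraticChar_sum_zero hF)

lemma sum_quadraticChar_mul_sub (hF : ringChar F ≠ 2) (c : F) :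
    ∑ s, η s * η (c - s) = η (-1) * nu F c := by
  by_cases hc : c = 0
  · have hsq : ∀ s : F, η s * η (c - s) = η (-1) * (1 - if s = 0 then 1 else 0) := by
      intro s
      split_ifs with hs
      · simp [hs]
      · rw [hc, zero_sub, neg_eq_neg_one_mul, map_mul, mul_left_comm, quadraticChar_mul_self hs]
        ring
    rw [sum_congr rfl fun s _ => hsq s, ← mul_sum, sum_sub_distrib, sum_ite_eq']
    simp [nu, hc]
  · have hJ := jacobiSum_nontrivial_inv (quadraticChar_ne_one hF)
    rw [(quadraticChar_isQuadratic F).inv, jacobiSum] at hJ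
    have hs : ∀ s, η (c * s) * η (c - c * s) = η s * η (1 - s) := by
      intro s
      rw [← mul_one_sub, map_mul, map_mul, mul_mul_mul_comm, quadraticChar_mul_self hc, one_mul]
    rw [← Equiv.sum_comp (Equiv.mulLeft₀ c hc) fun s => η s * η (c - s)]
    simp only [Equiv.mulLeft₀_apply, hs, hJ, nu, hc, if_false]
    ring

end CharacterSums

lemma card_add_eq_sum {G V W : Type*} [AddCommGroup G] [Fintype G] [Fintype V] [Fintype W]
    (f : V → G) (g : W → G) (c : G) :
    Nat.card {x : V × W // f x.1 + g x.2 = c} =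
      ∑ s, Nat.card {x // f x = s} * Nat.card {y // g y = c - s} := by
  simp only [Nat.card_eq_fintype_card, Fintype.card_subtype]
  rw [card_eq_sum_card_fiberwise (f := fun x : V × W => f x.1) (t := univ)
    fun _ _ => mem_univ _]
  refine sum_congr rfl fun s _ => ?_
  rw [filter_filter, ← card_product, ← filter_product, univ_product_univ]
  congr 1
  ext x
  simp only [mem_filter, mem_univ, true_and]
  constructor
  · rintro ⟨h, rfl⟩; exact ⟨rfl, by rw [← h]; abel⟩
  · rintro ⟨rfl, h⟩; exact ⟨by rw [h]; abel, rfl⟩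

section DiagonalForms

variable {F : Type*} [Field F]

local notation "η" => quadraticChar F

def sqSumCount {ι : Type*} [Fintype ι] (w : ι → F) (c : F) : ℕ :=
  Nat.card {v : ι → F // ∑ i, w i * v i ^ 2 = c}

variable {ι κ : Type*} [Fintype ι] [Fintype κ]

lemma sqSumCount_comp_equiv (e : κ ≃ ι) (w : ι → F) (c : F) :
    sqSumCount (w ∘ e) c = sqSumCount w c :=
  Nat.card_congr <| (e.arrowCongr (Equiv.refl F)).subtypeEquiv fun v => by
    simp [← e.sum_comp]

variable [Fintype F]

lemma sqSumCount_sumElim (w : ι → F) (w' : κ → F) (c : F) :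
    sqSumCount (Sum.elim w w') c = ∑ s, sqSumCount w s * sqSumCount w' (c - s) := by
  simp only [sqSumCount]
  rw [← card_add_eq_sum]
  exact Nat.card_congr <| (Equiv.sumArrowEquivProdArrow ι κ F).subtypeEquiv fun v => by
    simp [Fintype.sum_sum_type]

lemma sqSumCount_unique [Unique ι] (hF : ringChar F ≠ 2) (w : ι → F) (hw : w default ≠ 0)
    (c : F) : (sqSumCount w c : ℤ) = 1 + η (w default) * η c := by
  have hcard : sqSumCount w c = Nat.card {x : F | x ^ 2 = (w default)⁻¹ * c} :=
    Nat.card_congr <| (Equiv.funUnique ι F).subtypeEquiv fun v => by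
      simp [eq_inv_mul_iff_mul_eq₀ hw]
  rw [hcard, Nat.card_eq_card_toFinset, quadraticChar_card_sqrts hF, map_mul, quadraticChar_inv]
  ring

end DiagonalForms

section OddRank

variable {F : Type*} [Field F] [Fintype F]

local notation "q" => (Fintype.card F : ℤ)
local notation "η" => quadraticChar F

lemma sqSumCount_fin_two (hF : ringChar F ≠ 2) (w : Fin 2 → F) (hw : ∀ i, w i ≠ 0) (c : F) :
    (sqSumCount w c : ℤ) = q + η (-(w 0 * w 1)) * nu F c := by
  have hsplit : w ∘ (finSumFinEquiv : Fin 1 ⊕ Fin 1 ≃ Fin 2) =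
      Sum.elim (fun _ : Fin 1 => w 0) (fun _ : Fin 1 => w 1) := by
    ext i; rcases i with i | i <;> fin_cases i <;> rfl
  rw [← sqSumCount_comp_equiv (finSumFinEquiv : Fin 1 ⊕ Fin 1 ≃ Fin 2), hsplit,
    sqSumCount_sumElim, Nat.cast_sum]
  simp only [Nat.cast_mul, sqSumCount_unique hF (fun _ : Fin 1 => w 0) (hw 0),
    sqSumCount_unique hF (fun _ : Fin 1 => w 1) (hw 1)]
  have hexp : ∀ s, (1 + η (w 0) * η s) * (1 + η (w 1) * η (c - s)) =
      1 + η (w 0) * η s + η (w 1) * η (c - s) + η (w 0) * η (w 1) * (η s * η (c - s)) := by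
    intro s; ring
  simp only [hexp, sum_add_distrib, ← mul_sum, sum_const, card_univ, nsmul_eq_mul, mul_one,
    quadraticChar_sum_zero hF, sum_quadraticChar_sub hF, sum_quadraticChar_mul_sub hF]
  rw [neg_eq_neg_one_mul (w 0 * w 1), map_mul, map_mul]
  ring

lemma sum_mul_binary_sub (ε A B : ℤ) (X : F → ℤ) (hX : ∑ s, X s = 0) (c : F) :
    ∑ s, (A + B * X s) * (q + ε * nu F (c - s)) = q ^ 2 * A + ε * q * B * X c := by
  have hS : ∑ s, (A + B * X s) = q * A := by
    simp [sum_add_distrib, ← mul_sum, hX]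
  have hexp : ∀ s, (A + B * X s) * (q + ε * nu F (c - s)) =
      q * (A + B * X s) + ε * ((A + B * X s) * nu F (c - s)) := by
    intro s; ring
  rw [sum_congr rfl fun s _ => hexp s, sum_add_distrib, ← mul_sum, ← mul_sum, sum_mul_nu_sub, hS]
  ring

theorem sqSumCount_fin_odd (hF : ringChar F ≠ 2) (n : ℕ) (w : Fin (2 * n + 1) → F)
    (hw : ∀ i, w i ≠ 0) (c : F) :
    (sqSumCount w c : ℤ) = q ^ (2 * n) + η ((-1) ^ n * ∏ i, w i) * η c * q ^ n := by
  induction n generalizing c with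
  | zero =>
    have : Unique (Fin (2 * 0 + 1)) := inferInstanceAs (Unique (Fin 1))
    rw [sqSumCount_unique hF w (hw _)]
    simp
  | succ n ih =>
    set a : Fin (2 * n + 1) → F := w ∘ Fin.castAdd 2
    set b : Fin 2 → F := w ∘ Fin.natAdd (2 * n + 1)
    have hsplit : w ∘ (finSumFinEquiv : Fin (2 * n + 1) ⊕ Fin 2 ≃ Fin (2 * n + 1 + 2)) =
        Sum.elim a b := by
      ext i; rcases i with i | i <;> rfl
    have hprod : (-1) ^ (n + 1) * ∏ i, w i = -(b 0 * b 1) * ((-1) ^ n * ∏ i, a i) := by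
      rw [show ∏ i, w i = ∏ i : Fin (2 * n + 1 + 2), w i from rfl, Fin.prod_univ_add,
        Fin.prod_univ_two]
      simp only [a, b, Function.comp_apply]
      ring
    have hconv := sum_mul_binary_sub (η (-(b 0 * b 1))) (q ^ (2 * n))
      (η ((-1) ^ n * ∏ i, a i) * q ^ n) (fun s => η s) (quadraticChar_sum_zero hF) c
    rw [← sqSumCount_comp_equiv
        (finSumFinEquiv : Fin (2 * n + 1) ⊕ Fin 2 ≃ Fin (2 * n + 1 + 2)),
      hsplit, sqSumCount_sumElim, Nat.cast_sum]
    simp only [Nat.cast_mul, ih a (fun i => hw _), sqSumCount_fin_two hF b (fun i => hw _)]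
    rw [hprod, map_mul (quadraticChar F) (-(b 0 * b 1))]
    convert hconv using 1
    · exact sum_congr rfl fun s _ => by ring
    · ring

theorem sqSumCount_of_card_eq_odd {ι : Type*} [Fintype ι] (hF : ringChar F ≠ 2) {n : ℕ}
    (hι : Fintype.card ι = 2 * n + 1) (w : ι → F) (hw : ∀ i, w i ≠ 0) (c : F) :
    (sqSumCount w c : ℤ) = q ^ (2 * n) + η ((-1) ^ n * ∏ i, w i) * η c * q ^ n := by
  let e := (Fintype.equivFinOfCardEq hι).symm
  rw [← sqSumCount_comp_equiv e, sqSumCount_fin_odd hF n (w ∘ e) fun i => hw _,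
    Function.comp_def, e.prod_comp]

end OddRank

section ValueCounts

variable {F : Type*} [Field F] [Fintype F]

local notation "η" => quadraticChar F

lemma card_quadraticChar_eq_zero : Nat.card {c : F // η c = 0} = 1 := by
  rw [Nat.card_congr (Equiv.subtypeEquivRight fun c => quadraticChar_eq_zero_iff)]
  simp

lemma two_mul_card_quadraticChar_eq (hF : ringChar F ≠ 2) {t : ℤ} (ht : t = 1 ∨ t = -1) :
    2 * Nat.card {c : F // η c = t} = Fintype.card F - 1 := by
  obtain ⟨a, ha⟩ := quadraticChar_exists_neg_one hF
  have ha0 : a ≠ 0 := fun h => by simp [h] at ha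
  have hswap : Nat.card {c : F // η c = 1} = Nat.card {c : F // η c = -1} :=
    Nat.card_congr <| (Equiv.mulLeft₀ a ha0).subtypeEquiv fun c => by
      simp only [Equiv.mulLeft₀_apply, map_mul, ha]
      omega
  have hpart : Fintype.card F =
      Nat.card {c : F // η c = 0} + Nat.card {c : F // η c = 1} +
        Nat.card {c : F // η c = -1} := by
    rw [← card_univ, card_eq_sum_card_fiberwise (f := η) (t := {0, 1, -1}) fun c _ => ?_]
    · simp [Nat.card_eq_fintype_card, Fintype.card_subtype, add_assoc]
    · simpa using quadraticChar_isQuadratic F c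
  rw [card_quadraticChar_eq_zero] at hpart
  rcases ht with rfl | rfl <;> omega

lemma card_affine_eq_card_quadraticChar_eq {A B : ℤ} (hB : B ≠ 0) {d : F} (hd : d ≠ 0)
    (M : F → ℤ) (hM : ∀ c, M c = A + η d * η c * B) {v t : ℤ} (hv : v = A + t * B) :
    Nat.card {c // M c = v} = Nat.card {c // η c = η d * t} := by
  refine Nat.card_congr (Equiv.subtypeEquivRight fun c => ?_)
  rw [hM, hv, add_right_inj, mul_left_inj' hB]
  constructor
  · intro h; rw [← h, ← mul_assoc, quadraticChar_mul_self hd, one_mul]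
  · intro h; rw [h, ← mul_assoc, quadraticChar_mul_self hd, one_mul]

lemma card_affine_quadraticChar_eq_self {A B : ℤ} (hB : B ≠ 0) {d : F} (hd : d ≠ 0)
    (M : F → ℤ) (hM : ∀ c, M c = A + η d * η c * B) : Nat.card {c // M c = A} = 1 := by
  rw [card_affine_eq_card_quadraticChar_eq hB hd M hM (t := 0) (by ring), mul_zero,
    card_quadraticChar_eq_zero]

lemma two_mul_card_affine_quadraticChar_eq (hF : ringChar F ≠ 2) {A B : ℤ} (hB : B ≠ 0)
    {d : F} (hd : d ≠ 0) (M : F → ℤ) (hM : ∀ c, M c = A + η d * η c * B) {v t : ℤ}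
    (ht : t = 1 ∨ t = -1) (hv : v = A + t * B) :
    2 * Nat.card {c // M c = v} = Fintype.card F - 1 := by
  rw [card_affine_eq_card_quadraticChar_eq hB hd M hM hv]
  refine two_mul_card_quadraticChar_eq hF ?_
  rcases quadraticChar_dichotomy hd with h | h <;> rcases ht with rfl | rfl <;> simp [h]

end ValueCounts

lemma card_subtype_prod_add_eq {B C : Type*} [AddGroup C] (s : B → C) (P : C → Prop) :
    Nat.card {bc : B × C // P (bc.2 + s bc.1)} = Nat.card B * Nat.card {c // P c} := by
  rw [← Nat.card_prod]
  exact Nat.card_congr <| (Equiv.subtypeProdEquivSigmaSubtype fun b c => P (c + s b)).trans <|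
    (Equiv.sigmaCongrRight fun b => (Equiv.addRight (s b)).subtypeEquiv fun _ => Iff.rfl).trans
      (Equiv.sigmaEquivProd _ _)

section QuadraticForms

variable {K V : Type*} [Field K] [AddCommGroup V] [Module K V] [FiniteDimensional K V]

lemma exists_map_add_sub_map_eq_add {Q : QuadraticForm K V}
    (hQ : (QuadraticMap.polarBilin Q).SeparatingLeft) (f : Module.Dual K V) :
    ∃ a, ∀ x, Q (x + a) - Q a = Q x + f x := by
  have hnd : (QuadraticMap.polarBilin Q).Nondegenerate :=
    (LinearMap.IsRefl.nondegenerate_iff_separatingLeft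
      fun x y h => (QuadraticMap.polar_comm Q y x).trans h).2 hQ
  refine ⟨(LinearMap.BilinForm.toDual _ hnd).symm f, fun x => ?_⟩
  rw [← LinearMap.BilinForm.apply_toDual_symm_apply (hB := hnd) f x]
  simp only [QuadraticMap.polarBilin_apply_apply, QuadraticMap.polar, add_comm x]
  ring

lemma exists_card_eq_sqSumCount [Fintype K] (hK : ringChar K ≠ 2) {Q : QuadraticForm K V}
    (hQ : (QuadraticMap.polarBilin Q).SeparatingLeft) :
    ∃ w : Fin (Module.finrank K V) → K, (∀ i, w i ≠ 0) ∧
      ∀ c, Nat.card {x // Q x = c} = sqSumCount w c := by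
  have : Invertible (2 : K) := invertibleOfNonzero (Ring.two_ne_zero hK)
  have hassoc : (QuadraticMap.associated (R := K) Q).SeparatingLeft := fun x hx =>
    hQ x fun y => by
      rw [← QuadraticMap.two_nsmul_associated K Q, LinearMap.smul_apply, LinearMap.smul_apply,
        hx y, smul_zero]
  obtain ⟨w, ⟨e⟩⟩ := Q.equivalent_weightedSumSquares_units_of_nondegenerate' hassoc
  refine ⟨fun i => w i, fun i => (w i).ne_zero, fun c => ?_⟩
  calc Nat.card {x // Q x = c}
      = Nat.card {v // QuadraticMap.weightedSumSquares K w v = c} :=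
        Nat.card_congr (e.toLinearEquiv.toEquiv.subtypeEquiv fun x => by simp [e.map_app])
    _ = sqSumCount (fun i => (w i : K)) c := by
        simp [sqSumCount, QuadraticMap.weightedSumSquares_apply, Units.smul_def, sq]

theorem card_eq_of_finrank_eq_odd [Fintype K] (hK : ringChar K ≠ 2) {Q : QuadraticForm K V}
    (hQ : (QuadraticMap.polarBilin Q).SeparatingLeft) {n : ℕ}
    (hV : Module.finrank K V = 2 * n + 1) :
    ∃ d : K, d ≠ 0 ∧ ∀ c, (Nat.card {x // Q x = c} : ℤ) =
      (Fintype.card K : ℤ) ^ (2 * n) +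
        quadraticChar K d * quadraticChar K c * Fintype.card K ^ n := by
  obtain ⟨w, hw, hcard⟩ := exists_card_eq_sqSumCount hK hQ
  refine ⟨(-1) ^ n * ∏ i, w i,
    mul_ne_zero (pow_ne_zero _ (neg_ne_zero.2 one_ne_zero))
      (prod_ne_zero_iff.2 fun i _ => hw i),
    fun c => ?_⟩
  rw [hcard, sqSumCount_of_card_eq_odd hK ((Fintype.card_fin _).trans hV) w hw]

lemma card_level_sets_add_dual {B : Type*} {Q : QuadraticForm K V}
    (hQ : (QuadraticMap.polarBilin Q).SeparatingLeft) (f : B → Module.Dual K V)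
    (P : ℕ → Prop) :
    Nat.card {bc : B × K // P (Nat.card {x // Q x + f bc.1 x = bc.2})} =
      Nat.card B * Nat.card {c // P (Nat.card {x // Q x = c})} := by
  choose a ha using fun b => exists_map_add_sub_map_eq_add hQ (f b)
  have hshift : ∀ b c, Nat.card {x // Q x + f b x = c} = Nat.card {x // Q x = c + Q (a b)} :=
    fun b c => Nat.card_congr <| (Equiv.addRight (a b)).subtypeEquiv fun x => by
      rw [Equiv.coe_addRight, ← ha]
      constructor <;> intro h <;> linear_combination h
  simp only [hshift]
  exact card_subtype_prod_add_eq (fun b => Q (a b)) fun c => P (Nat.card {x // Q x = c})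

end QuadraticForms

/-- For `p` an odd prime, `m` odd, and a quadratic form `Q` of rank `m`
(nondegenerate polar form) on `F_{p^m}` over `F_p`, as `(b,c)` ranges over
`F_{p^m} × F_p`, the count `N_{b,c}` equals `p^{m-1}` exactly `p^m` times, and equals
`p^{m-1} ∓ p^{(m-1)/2}` exactly `(1/2)(p-1)p^m` times each. -/
theorem stmt_1 (p m : ℕ) [Fact p.Prime] (hp : Odd p) (hm : Odd m)
    (Q : QuadraticForm (ZMod p) (GaloisField p m))
    (hrank : ∀ x : GaloisField p m, (∀ z, Q (x + z) - Q x - Q z = 0) → x = 0) :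
    Nat.card {bc : GaloisField p m × ZMod p //
        (Nbc p m Q bc.1 bc.2 : ℤ) = (p : ℤ) ^ (m - 1)} = p ^ m ∧
    2 * Nat.card {bc : GaloisField p m × ZMod p //
        (Nbc p m Q bc.1 bc.2 : ℤ) = (p : ℤ) ^ (m - 1) - (p : ℤ) ^ ((m - 1) / 2)}
      = (p - 1) * p ^ m ∧
    2 * Nat.card {bc : GaloisField p m × ZMod p //
        (Nbc p m Q bc.1 bc.2 : ℤ) = (p : ℤ) ^ (m - 1) + (p : ℤ) ^ ((m - 1) / 2)}
      = (p - 1) * p ^ m := by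
  obtain ⟨k, rfl⟩ := hm
  have hF : ringChar (ZMod p) ≠ 2 := by
    rw [ZMod.ringChar_zmod_n]; rintro rfl; exact absurd hp (by decide)
  have hQ : (QuadraticMap.polarBilin Q).SeparatingLeft := hrank
  obtain ⟨d, hd, hcount⟩ := card_eq_of_finrank_eq_odd hF hQ (GaloisField.finrank p (by omega))
  rw [ZMod.card] at hcount
  have hpairs (v : ℤ) : Nat.card {bc : GaloisField p (2 * k + 1) × ZMod p //
      (Nbc p _ Q bc.1 bc.2 : ℤ) = v} =
        p ^ (2 * k + 1) * Nat.card {c // (Nat.card {x // Q x = c} : ℤ) = v} := by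
    rw [← GaloisField.card p _ (by omega)]
    exact card_level_sets_add_dual hQ (fun b => (Algebra.trace (ZMod p) _).comp
      (LinearMap.mulLeft (ZMod p) b)) fun n => (n : ℤ) = v
  have hB : (p : ℤ) ^ k ≠ 0 := pow_ne_zero _ (by exact_mod_cast (Fact.out : p.Prime).ne_zero)
  simp only [hpairs, Nat.add_sub_cancel, show 2 * k / 2 = k by omega]
  refine ⟨?_, ?_, ?_⟩
  · rw [card_affine_quadraticChar_eq_self hB hd _ hcount, mul_one]
  · rw [mul_left_comm, two_mul_card_affine_quadraticChar_eq hF hB hd _ hcount (Or.inr rfl)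
      (by ring), ZMod.card, mul_comm]
  · rw [mul_left_comm, two_mul_card_affine_quadraticChar_eq hF hB hd _ hcount (Or.inl rfl)
      (by ring), ZMod.card, mul_comm]
end
end

section
/- Let p be an odd prime, m an odd positive integer, and let f : F_{p^m} → F_{p^m} be a PN-DO function. Then for every a ∈ F_{p^m} with a ≠ 0 and all b ∈ F_{p^m}, c ∈ F_p, the number #{x ∈ F_{p^m} : Tr(a f(x) + b x) + c = 0} lies in the set {p^{m−1}, p^{m−1} − p^{(m−1)/2}, p^{m−1} + p^{(m−1)/2}}. Consequently the codeword c(a,b,c) = ((Tr(a f(x)+bx)+c)_{x∈F_{p^m}}, Tr(a)) of length p^m+1 has Hamming weight (p−1)p^{m−1}+σ, (p−1)p^{m−1}+p^{(m−1)/2}+σ, or (p−1)p^{m−1}−p^{(m−1)/2}+σ, where σ = 1 if Tr(a) ≠ 0 and σ = 0 if Tr(a) = 0. -/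
noncomputable section
open scoped Classical

noncomputable instance (p n : ℕ) [Fact p.Prime] : Fintype (GaloisField p n) :=
  Fintype.ofFinite _

/-- The codeword `c(a,b,c) = ((Tr(a f(x)+bx)+c)_{x∈F_{p^m}}, Tr(a))` of length `p^m + 1`;
the coordinate `none` is the last coordinate `Tr(a)`. -/
def fullWord (p m : ℕ) [Fact p.Prime] (f : GaloisField p m → GaloisField p m)
    (a b : GaloisField p m) (c : ZMod p) : Option (GaloisField p m) → ZMod p :=
  fun i => i.elim (tr p m a) fun x => tr p m (a * f x + b * x) + c

/-! Since `f` is Dembowski–Ostrom, `Q x = Tr (a f x)` is a quadratic form over `𝔽_p`, and since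
`f` is perfect nonlinear and `a ≠ 0`, its polar form is nondegenerate. Completing the square turns
the count for `Tr (a f x + b x) + c = 0` into a fibre count `N w = #{x | Q x = w}`.
Nondegeneracy gives the two moments `∑ N = p ^ m` and `p ∑ N² = p ^ m (p ^ m + p - 1)`, and `N`
is constant on the two square classes of `𝔽_pˣ`. With `m = 2t + 1`, the deviations `α, β` of
`N 1` and `N` (nonsquare) from `p ^ (2t)` then satisfy
`p (α + β)² + (α - β)² = 4 p ^ (2t)`, and a `p`-adic descent leaves only `0, ±p ^ t` for all
deviations. -/

open Finset

theorem Equiv.card_filter_comp {α : Type*} [Fintype α] (e : α ≃ α) (P : α → Prop)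
    [DecidablePred P] : #{x | P (e x)} = #{x | P x} := by
  simp only [card_filter]
  exact e.sum_comp fun x => if P x then 1 else 0

theorem Finset.sum_card_fiber_sq {G β : Type*} [AddGroup G] [Fintype G] [Fintype β]
    [DecidableEq β] (Q : G → β) :
    ∑ v, #{x | Q x = v} ^ 2 = ∑ u, #{x | Q (x + u) = Q x} := by
  have hfiber (x : G) : #{y | Q y = Q x} = #{u | Q (x + u) = Q x} :=
    ((Equiv.addLeft x).card_filter_comp (Q · = Q x)).symm
  calc ∑ v, #{x | Q x = v} ^ 2
      = ∑ v, ∑ x with Q x = v, #{y | Q y = Q x} := by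
        refine sum_congr rfl fun v _ => ?_
        rw [sum_congr rfl fun x hx => by rw [(mem_filter.1 hx).2], sum_const, smul_eq_mul, sq]
    _ = ∑ x, #{u | Q (x + u) = Q x} := by
        rw [sum_fiberwise univ Q]
        exact sum_congr rfl fun x _ => hfiber x
    _ = ∑ u, #{x | Q (x + u) = Q x} := by
        simp only [card_filter]
        exact sum_comm

theorem LinearMap.card_mul_card_fiber {K V : Type*} [Field K] [Fintype K] [DecidableEq K]
    [AddCommGroup V] [Module K V] [Fintype V] {φ : V →ₗ[K] K} (hφ : φ ≠ 0) (c : K) :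
    Fintype.card K * #{x | φ x = c} = Fintype.card V := by
  have hsurj := LinearMap.surjective_of_ne_zero hφ
  have hconst (v : K) : #{x | φ x = v} = #{x | φ x = c} :=
    AddMonoidHom.card_fiber_eq_of_mem_range φ.toAddMonoidHom (hsurj v) (hsurj c)
  rw [← card_univ (α := V), card_eq_sum_card_fiberwise (s := univ) (t := univ) (f := φ)
    (fun _ _ => mem_univ _), sum_congr rfl fun v _ => hconst v, sum_const, card_univ, smul_eq_mul]

theorem hammingNorm_option {ι β : Type*} [Fintype ι] [Zero β] [DecidableEq β]
    (g : Option ι → β) :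
    hammingNorm g + #{i | g (some i) = 0} = (if g none ≠ 0 then 1 else 0) + Fintype.card ι := by
  rw [hammingNorm, card_filter, Fintype.sum_option, ← card_filter, add_assoc, add_comm (#_),
    card_filter_add_card_filter_not, card_univ]

namespace FiniteField

variable {F : Type*} [Field F] [Fintype F] [DecidableEq F]

theorem isSquare_mul_of_not_isSquare {u v : F} (hu : ¬IsSquare u) (hv : ¬IsSquare v) :
    IsSquare (u * v) := by
  have hne {w : F} (hw : ¬IsSquare w) : w ≠ 0 := fun h => hw (h ▸ IsSquare.zero)
  rw [← quadraticChar_one_iff_isSquare (mul_ne_zero (hne hu) (hne hv)), map_mul,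
    quadraticChar_neg_one_iff_not_isSquare.2 hu, quadraticChar_neg_one_iff_not_isSquare.2 hv]
  norm_num

theorem exists_sq_eq_or_sq_mul_eq {u v : F} (hu : ¬IsSquare u) (hv : v ≠ 0) :
    ∃ c ≠ 0, c ^ 2 = v ∨ c ^ 2 * u = v := by
  have hu0 : u ≠ 0 := fun h => hu (h ▸ IsSquare.zero)
  by_cases hsq : IsSquare v
  · obtain ⟨r, rfl⟩ := hsq
    exact ⟨r, fun h => hv (by rw [h, mul_zero]), Or.inl (sq r)⟩
  · obtain ⟨r, hr⟩ := isSquare_mul_of_not_isSquare hu hsq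
    refine ⟨r / u, div_ne_zero (fun h => ?_) hu0, Or.inr ?_⟩
    · exact mul_ne_zero hu0 hv (by rw [hr, h, mul_zero])
    · field_simp
      linear_combination -hr

/-- The nonzero elements pair up as `v, u * v`, exactly one of which is a square. -/
theorem two_mul_sum_of_mul_sq_invariant {M : Type*} [AddCommMonoid M] {u : F} (hu : ¬IsSquare u)
    {g : F → M} (hg : ∀ c ≠ 0, ∀ v, g (c ^ 2 * v) = g v) :
    2 • ∑ v, g v = 2 • g 0 + (Fintype.card F - 1) • (g 1 + g u) := by
  have hu0 : u ≠ 0 := fun h => hu (h ▸ IsSquare.zero)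
  have hpair (v : F) (hv : v ≠ 0) : g v + g (u * v) = g 1 + g u := by
    obtain ⟨c, hc, rfl | rfl⟩ := exists_sq_eq_or_sq_mul_eq hu hv
    · rw [← hg c hc 1, ← hg c hc u, mul_one, mul_comm]
    · rw [← hg c hc u, ← hg (c * u) (mul_ne_zero hc hu0) 1, add_comm]
      congr 2; ring
  calc 2 • ∑ v, g v = ∑ v, (g v + g (u * v)) := by
        rw [sum_add_distrib, two_nsmul]
        congr 1
        exact (Equiv.sum_comp (Equiv.mulLeft₀ u hu0) g).symm
    _ = 2 • g 0 + (Fintype.card F - 1) • (g 1 + g u) := by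
        rw [Fintype.sum_eq_add_sum_compl 0, mul_zero, ← two_nsmul,
          sum_congr rfl fun v hv => hpair v (by simpa using hv), sum_const, card_compl,
          card_singleton]

end FiniteField

theorem Int.pow_dvd_of_mul_sq_add_sq_eq {p : ℤ} (hp : Prime p) (n : ℤ) :
    ∀ {t : ℕ} {s d : ℤ}, p * s ^ 2 + d ^ 2 = p ^ (2 * t) * n → p ^ t ∣ s ∧ p ^ t ∣ d
  | 0, _, _, _ => by simp
  | t + 1, s, d, h => by
    have hp0 : p ≠ 0 := hp.ne_zero
    obtain ⟨d, rfl⟩ : p ∣ d := hp.dvd_of_dvd_pow (n := 2)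
      ⟨p ^ (2 * t + 1) * n - s ^ 2, by linear_combination h⟩
    obtain ⟨s, rfl⟩ : p ∣ s := hp.dvd_of_dvd_pow (n := 2)
      ⟨p ^ (2 * t) * n - d ^ 2, mul_left_cancel₀ hp0 (by linear_combination h)⟩
    have h' : p * s ^ 2 + d ^ 2 = p ^ (2 * t) * n :=
      mul_left_cancel₀ (pow_ne_zero 2 hp0) (by linear_combination h)
    obtain ⟨hs, hd⟩ := Int.pow_dvd_of_mul_sq_add_sq_eq hp n h'
    exact ⟨by rw [pow_succ']; exact mul_dvd_mul_left p hs,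
      by rw [pow_succ']; exact mul_dvd_mul_left p hd⟩

theorem Int.mem_of_sum_eq_zero_of_sum_sq_eq {p : ℕ} (hp : p.Prime) (hodd : Odd p) (t : ℕ)
    {A α β : ℤ} (h1 : 2 * A + (p - 1) * (α + β) = 0)
    (h2 : 2 * A ^ 2 + (p - 1) * (α ^ 2 + β ^ 2) = 2 * (p - 1) * p ^ (2 * t)) :
    ∀ x ∈ ({A, α, β} : Set ℤ), x ∈ ({0, (p : ℤ) ^ t, -(p : ℤ) ^ t} : Set ℤ) := by
  have hp3 : (3 : ℤ) ≤ p := by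
    have := hp.two_le; obtain ⟨k, hk⟩ := hodd; omega
  have hpodd : (p : ℤ) % 2 = 1 := by obtain ⟨k, hk⟩ := hodd; omega
  -- eliminate `A`
  have hsd : p * (α + β) ^ 2 + (α - β) ^ 2 = p ^ (2 * t) * 4 := by
    refine mul_left_cancel₀ (show (p : ℤ) - 1 ≠ 0 by omega) ?_
    linear_combination 2 * h2 - (2 * A - (p - 1) * (α + β)) * h1
  obtain ⟨⟨S, hS⟩, ⟨D, hD⟩⟩ :=
    Int.pow_dvd_of_mul_sq_add_sq_eq (Nat.prime_iff_prime_int.1 hp) 4 hsd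
  have hr : (0 : ℤ) < p ^ t := by positivity
  have hSD : p * S ^ 2 + D ^ 2 = 4 := by
    refine mul_left_cancel₀ (pow_ne_zero 2 hr.ne') ?_
    linear_combination hsd - p * (α + β + p ^ t * S) * hS - (α - β + p ^ t * D) * hD
  rw [hS] at h1
  generalize (p : ℤ) ^ t = r at *
  simp only [Set.mem_insert_iff, Set.mem_singleton_iff, forall_eq_or_imp, forall_eq]
  have hS1 : S = 0 ∨ S = 1 ∨ S = -1 := by
    have : S ^ 2 ≤ 1 := by nlinarith
    have : -1 ≤ S ∧ S ≤ 1 := by constructor <;> nlinarith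
    omega
  rcases hS1 with rfl | rfl | rfl
  · have hD2 : D = 2 ∨ D = -2 := by
      have : (D - 2) * (D + 2) = 0 := by linear_combination hSD
      rcases mul_eq_zero.1 this with h | h <;> omega
    rcases hD2 with rfl | rfl <;> omega
  all_goals
    have hpD : (p : ℤ) = 3 ∧ (D = 1 ∨ D = -1) := by
      have : D ^ 2 ≤ 1 := by nlinarith
      have : -1 ≤ D ∧ D ≤ 1 := by constructor <;> nlinarith
      rcases (show D = 0 ∨ D = 1 ∨ D = -1 by omega) with rfl | rfl | rfl <;> omega
    obtain ⟨hp_eq, rfl | rfl⟩ := hpD <;> rw [hp_eq] at h1 <;> omega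

namespace QuadraticMap

section Field

variable {K V : Type*} [Field K] [DecidableEq K] [AddCommGroup V] [Module K V]
  [Fintype V] {Q : QuadraticForm K V}

variable (Q) in
theorem card_fiber_mul_sq {c : K} (hc : c ≠ 0) (v : K) :
    #{x | Q x = c ^ 2 * v} = #{x | Q x = v} := by
  rw [← (LinearEquiv.smulOfNeZero K V c hc).toEquiv.card_filter_comp]
  refine congrArg card (filter_congr fun x _ => ?_)
  rw [LinearEquiv.coe_toEquiv, LinearEquiv.smulOfNeZero_apply, Q.map_smul, smul_eq_mul, ← pow_two,
    mul_right_inj' (pow_ne_zero 2 hc)]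

theorem card_mul_card_map_add_eq [Fintype K] (hQ : Q.polarBilin.Nondegenerate) {u : V}
    (hu : u ≠ 0) :
    Fintype.card K * #{x | Q (x + u) = Q x} = Fintype.card V := by
  have hφ : Q.polarBilin u ≠ 0 := fun h => hu (hQ.1 u fun x => by rw [h, LinearMap.zero_apply])
  rw [← LinearMap.card_mul_card_fiber hφ (-Q u)]
  congr 2 with x
  simp only [mem_filter, mem_univ, true_and]
  rw [polarBilin_apply_apply, polar, add_comm u x]
  constructor <;> intro h <;> linear_combination h

theorem card_mul_sum_card_fiber_sq [Fintype K] (hQ : Q.polarBilin.Nondegenerate) :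
    Fintype.card K * ∑ v, #{x | Q x = v} ^ 2 + Fintype.card V
      = Fintype.card V * (Fintype.card V + Fintype.card K) := by
  have hrest : ∑ u ∈ {0}ᶜ, Fintype.card K * #{x | Q (x + u) = Q x}
      = (Fintype.card V - 1) * Fintype.card V := by
    rw [sum_congr rfl fun u hu => card_mul_card_map_add_eq hQ (by simpa using hu), sum_const,
      card_compl, card_singleton, smul_eq_mul]
  have hV : 1 ≤ Fintype.card V := Fintype.card_pos
  rw [sum_card_fiber_sq, mul_sum, Fintype.sum_eq_add_sum_compl 0, hrest]
  simp only [add_zero, filter_true, card_univ]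
  zify [hV]
  ring

theorem card_fiber_add_dual (hQ : Q.polarBilin.Nondegenerate) (φ : Module.Dual K V) (w : K) :
    ∃ w', #{x | Q x + φ x = w} = #{x | Q x = w'} := by
  set y := (LinearMap.BilinForm.toDual Q.polarBilin hQ).symm φ
  have hshift (x : V) : Q (x + y) = Q x + φ x + Q y := by
    rw [← LinearMap.BilinForm.apply_toDual_symm_apply (hB := hQ) φ x, polarBilin_apply_apply,
      polar, add_comm y x]
    ring
  refine ⟨w + Q y, ?_⟩
  rw [← (Equiv.addRight y).card_filter_comp (Q · = w + Q y)]
  refine congrArg card (filter_congr fun x _ => ?_)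
  rw [Equiv.coe_addRight, hshift]
  constructor <;> intro h <;> linear_combination h

end Field

theorem card_fiber_sub_pow_mem {p t : ℕ} [Fact p.Prime] (hp : Odd p) {V : Type*}
    [AddCommGroup V] [Module (ZMod p) V] [Fintype V] (hV : Fintype.card V = p ^ (2 * t + 1))
    {Q : QuadraticForm (ZMod p) V} (hQ : Q.polarBilin.Nondegenerate) (v : ZMod p) :
    (#{x | Q x = v} : ℤ) - p ^ (2 * t) ∈ ({0, (p : ℤ) ^ t, -(p : ℤ) ^ t} : Set ℤ) := by
  have hp2 : p ≠ 2 := by rintro rfl; exact Nat.not_odd_iff_even.2 even_two hp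
  obtain ⟨u, hu⟩ := FiniteField.exists_nonsquare (F := ZMod p) (by rwa [ZMod.ringChar_zmod_n])
  set N : ZMod p → ℤ := fun v => #{x | Q x = v}
  set P : ℤ := (p : ℤ) ^ (2 * t)
  have hN (c : ZMod p) (hc : c ≠ 0) (v : ZMod p) : N (c ^ 2 * v) = N v := by
    simp only [N, Q.card_fiber_mul_sq hc]
  have hsum : ∑ v, N v = p * P := by
    have := card_eq_sum_card_fiberwise (s := univ) (t := univ) (f := Q) fun _ _ => mem_univ _
    rw [card_univ, hV] at this
    simp only [N, P, ← Nat.cast_sum, ← this]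
    push_cast; ring
  have hsum_sq : ∑ v, N v ^ 2 = p * P ^ 2 + p * P - P := by
    have h : (p : ℤ) * ∑ v, N v ^ 2 + p ^ (2 * t + 1)
        = p ^ (2 * t + 1) * (p ^ (2 * t + 1) + p) := by
      have := card_mul_sum_card_fiber_sq hQ
      rw [hV, ZMod.card] at this
      simp only [N]
      exact_mod_cast this
    refine mul_left_cancel₀ (Nat.cast_ne_zero.2 (Fact.out : p.Prime).ne_zero) ?_
    linear_combination h
  have hpair := FiniteField.two_mul_sum_of_mul_sq_invariant hu hN
  have hpair_sq := FiniteField.two_mul_sum_of_mul_sq_invariant hu (g := fun v => N v ^ 2)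
    fun c hc v => by rw [hN c hc]
  simp only [nsmul_eq_mul, ZMod.card, Nat.cast_ofNat, Nat.cast_pred (Fact.out : p.Prime).pos]
    at hpair hpair_sq
  have hmem := Int.mem_of_sum_eq_zero_of_sum_sq_eq (Fact.out : p.Prime) hp t
    (A := N 0 - P) (α := N 1 - P) (β := N u - P)
    (by linear_combination 2 * hsum - hpair)
    (by linear_combination 2 * hsum_sq - hpair_sq + 2 * P * hpair - 4 * P * hsum)
  change N v - P ∈ _
  obtain rfl | hv := eq_or_ne v 0
  · exact hmem _ (by simp)
  obtain ⟨c, hc, rfl | rfl⟩ := FiniteField.exists_sq_eq_or_sq_mul_eq hu hv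
  · rw [← mul_one (c ^ 2), hN c hc 1]
    exact hmem _ (by simp)
  · rw [hN c hc u]
    exact hmem _ (by simp)

end QuadraticMap

section DembowskiOstrom

open QuadraticMap

variable {K L : Type*} [Field K] [Fintype K] [Field L] [Algebra K L] {n : ℕ}

variable (K) in
def dembowskiOstromBilin (δ : Fin n → Fin n → L) : LinearMap.BilinMap K L L :=
  ∑ i, ∑ j, (LinearMap.mul K L).compl₁₂
    (LinearMap.mulLeft K (δ i j) ∘ₗ (FiniteField.frobeniusAlgHom K L ^ (i : ℕ)).toLinearMap)
    (FiniteField.frobeniusAlgHom K L ^ (j : ℕ)).toLinearMap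

theorem dembowskiOstromBilin_apply_self (δ : Fin n → Fin n → L) (x : L) :
    dembowskiOstromBilin K δ x x
      = ∑ i, ∑ j, δ i j * x ^ (Fintype.card K ^ (i : ℕ) + Fintype.card K ^ (j : ℕ)) := by
  simp [dembowskiOstromBilin, LinearMap.sum_apply, AlgHom.coe_pow, FiniteField.coe_frobeniusAlgHom,
    pow_add, mul_assoc]

theorem exists_quadraticForm_eq_trace_mul [Finite L] {f : L → L} {δ : Fin n → Fin n → L}
    (hDO : ∀ x, f x = ∑ i, ∑ j,
      δ i j * x ^ (Fintype.card K ^ (i : ℕ) + Fintype.card K ^ (j : ℕ)))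
    (hPN : ∀ u ≠ 0, Function.Surjective fun x => f (x + u) - f x) {a : L} (ha : a ≠ 0) :
    ∃ Q : QuadraticForm K L,
      (∀ x, Q x = Algebra.trace K L (a * f x)) ∧ Q.polarBilin.Nondegenerate := by
  set Q : QuadraticForm K L := (Algebra.trace K L ∘ₗ LinearMap.mulLeft K a).compQuadraticMap
    (dembowskiOstromBilin K δ).toQuadraticMap
  have hQ (x : L) : Q x = Algebra.trace K L (a * f x) := by
    simp only [Q, LinearMap.compQuadraticMap_apply, LinearMap.BilinMap.toQuadraticMap_apply,
      dembowskiOstromBilin_apply_self, LinearMap.comp_apply, LinearMap.mulLeft_apply, hDO]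
  refine ⟨Q, hQ, (LinearMap.IsRefl.nondegenerate_iff_separatingLeft fun x y h => ?_).2 ?_⟩
  · rwa [polarBilin_apply_apply, polar_comm, ← polarBilin_apply_apply]
  intro u hu
  by_contra hu0
  obtain ⟨z, hz⟩ := Algebra.trace_surjective K L 1
  obtain ⟨x, hx : f (x + u) - f x = a⁻¹ * z + f u⟩ := hPN u hu0 (a⁻¹ * z + f u)
  have : Q.polarBilin u x = 1 := by
    rw [polarBilin_apply_apply, polar, hQ, hQ, hQ, ← map_sub, ← map_sub, add_comm u x,
      ← mul_sub, ← mul_sub, sub_right_comm, hx, add_sub_cancel_right, ← mul_assoc,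
      mul_inv_cancel₀ ha, one_mul, hz]
  exact one_ne_zero (this ▸ hu x)

end DembowskiOstrom

theorem hammingNorm_fullWord (p m : ℕ) [Fact p.Prime] (hm : m ≠ 0)
    (f : GaloisField p m → GaloisField p m) (a b : GaloisField p m) (c : ZMod p) :
    (hammingNorm (fullWord p m f a b c) : ℤ) = (if tr p m a ≠ 0 then 1 else 0) + p ^ m
      - Nat.card {x : GaloisField p m // tr p m (a * f x + b * x) + c = 0} := by
  have hzeros : #{x | fullWord p m f a b c (some x) = 0}
      = Nat.card {x : GaloisField p m // tr p m (a * f x + b * x) + c = 0} := by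
    rw [Nat.card_eq_fintype_card, Fintype.card_subtype]
    rfl
  have := congrArg (Nat.cast (R := ℤ)) (hammingNorm_option (fullWord p m f a b c))
  rw [hzeros, ← Nat.card_eq_fintype_card, GaloisField.card p m hm,
    show fullWord p m f a b c none = tr p m a from rfl] at this
  push_cast at this
  linear_combination this

/-- For `p` an odd prime, `m` odd, `f` a PN-DO function on `F_{p^m}`,
`a ≠ 0`, and any `b, c`: the count `#{x : Tr(a f(x)+bx)+c = 0}` lies in
`{p^{m−1}, p^{m−1} − p^{(m−1)/2}, p^{m−1} + p^{(m−1)/2}}`, and consequently the codeword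
`c(a,b,c)` has Hamming weight `(p−1)p^{m−1}+σ`, `(p−1)p^{m−1}+p^{(m−1)/2}+σ`, or
`(p−1)p^{m−1}−p^{(m−1)/2}+σ`, where `σ = 1` if `Tr(a) ≠ 0` and `σ = 0` otherwise. -/
theorem stmt_3 (p m : ℕ) [Fact p.Prime] (hp : Odd p) (hm : Odd m)
    (f : GaloisField p m → GaloisField p m)
    (hPN : ∀ a : GaloisField p m, a ≠ 0 → ∀ b : GaloisField p m,
      ∃! x : GaloisField p m, f (x + a) - f x = b)
    (δ : Fin m → Fin m → GaloisField p m)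
    (hDO : ∀ x, f x = ∑ i : Fin m, ∑ j : Fin m, δ i j * x ^ (p ^ (i : ℕ) + p ^ (j : ℕ)))
    (a : GaloisField p m) (ha : a ≠ 0) (b : GaloisField p m) (c : ZMod p) :
    ((Nat.card {x : GaloisField p m // tr p m (a * f x + b * x) + c = 0} : ℤ)
        ∈ ({(p : ℤ) ^ (m - 1),
            (p : ℤ) ^ (m - 1) - (p : ℤ) ^ ((m - 1) / 2),
            (p : ℤ) ^ (m - 1) + (p : ℤ) ^ ((m - 1) / 2)} : Set ℤ)) ∧
    ((hammingNorm (fullWord p m f a b c) : ℤ)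
        ∈ ({((p : ℤ) - 1) * (p : ℤ) ^ (m - 1) + (if tr p m a ≠ 0 then 1 else 0),
            ((p : ℤ) - 1) * (p : ℤ) ^ (m - 1) + (p : ℤ) ^ ((m - 1) / 2)
              + (if tr p m a ≠ 0 then 1 else 0),
            ((p : ℤ) - 1) * (p : ℤ) ^ (m - 1) - (p : ℤ) ^ ((m - 1) / 2)
              + (if tr p m a ≠ 0 then 1 else 0)} : Set ℤ)) := by
  obtain ⟨t, rfl⟩ := hm
  obtain ⟨Q, hQf, hQ⟩ := exists_quadraticForm_eq_trace_mul (K := ZMod p)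
    (by simpa only [ZMod.card] using hDO) (fun u hu b => (hPN u hu b).exists) ha
  obtain ⟨w, hw⟩ := Q.card_fiber_add_dual hQ
    (Algebra.trace (ZMod p) _ ∘ₗ LinearMap.mulLeft (ZMod p) b) (-c)
  have hcount : Nat.card {x // tr p _ (a * f x + b * x) + c = 0} = #{x | Q x = w} := by
    rw [← hw, Nat.card_eq_fintype_card, Fintype.card_subtype]
    congr 1 with x
    simp [hQf, tr, eq_neg_iff_add_eq_zero]
  have hV : Fintype.card (GaloisField p (2 * t + 1)) = p ^ (2 * t + 1) := by
    rw [← Nat.card_eq_fintype_card, GaloisField.card p _ (by omega)]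
  have hmem := Q.card_fiber_sub_pow_mem hp hV hQ w
  rw [hammingNorm_fullWord p _ (by omega), hcount, pow_succ _ (2 * t),
    show 2 * t + 1 - 1 = 2 * t by omega, show 2 * t / 2 = t by omega]
  simp only [Set.mem_insert_iff, Set.mem_singleton_iff] at hmem ⊢
  rcases hmem with h | h | h
  · exact ⟨Or.inl (by linarith), Or.inl (by linarith)⟩
  · exact ⟨Or.inr (Or.inr (by linarith)), Or.inr (Or.inr (by linarith))⟩
  · exact ⟨Or.inr (Or.inl (by linarith)), Or.inr (Or.inl (by linarith))⟩
end
end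

section
/- Let p = 3, let m > 1 be a positive integer, and let f : F_{3^m} → F_{3^m} be a PN-DO function. Then the dual code C̄_f^⊥ of the punctured code C̄_f ⊆ F_3^{3^m} has dimension 3^m − 2m − 1 over F_3 and minimum Hamming distance exactly 5; that is, C̄_f^⊥ is a ternary [3^m, 3^m−2m−1, 5] code. -/
noncomputable section
open scoped Classical

instance : Fact (Nat.Prime 3) := ⟨Nat.prime_three⟩

/-- The punctured codeword `(Tr(a f(x)+bx)+c)_{x∈F_{p^m}}` of length `p^m`. -/
def pWord (p m : ℕ) [Fact p.Prime] (f : GaloisField p m → GaloisField p m)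
    (a b : GaloisField p m) (c : ZMod p) : GaloisField p m → ZMod p :=
  fun x => tr p m (a * f x + b * x) + c

/-- The dual `C̄_f^⊥` of the punctured code: all vectors orthogonal to every codeword. -/
def pDual (p m : ℕ) [Fact p.Prime] (f : GaloisField p m → GaloisField p m) :
    Set (GaloisField p m → ZMod p) :=
  {v | ∀ (a b : GaloisField p m) (c : ZMod p), ∑ x, v x * pWord p m f a b c x = 0}

/-!
A DO polynomial `f` is an `𝔽₃`-quadratic map, since `x ^ (3 ^ i + 3 ^ j)` is the product of two
`𝔽₃`-linear Frobenius powers, and `f` being PN says exactly that for `a ≠ 0` the polar map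
`x ↦ f (x + a) - f x - f a` is bijective.

The dual code is the kernel of `v ↦ (∑ v x • f x, ∑ v x • x, ∑ v x)`. A functional vanishing on
the image of this map is, through the trace form, a codeword `Tr (a f x + b x) + c`, and PN forces
such a codeword to have `a = b = c = 0`; so the map is onto and the dimension is `3^m - 2m - 1`.

A ternary vector is `1` on a set `P`, `-1` on a disjoint set `N` and `0` elsewhere; it lies in the
dual code iff `#P ≡ #N (mod 3)`, `∑ P x = ∑ N x` and `∑ P f = ∑ N f`. If `#P + #N ≤ 4` only the
shapes `(1, 1)`, `(2, 2)` and `(3, 0)` (up to sign) are left: the first is absurd, the second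
contradicts PN directly and the third gives `f (x - y) = 3 (f x + f y) = 0`. Weight `5` is attained
by `P = {0, u, v, w}`, `N = {u + v + w}`, where `w` is found by surjectivity of the polar map.
-/

open Finset QuadraticMap

def IsPerfectNonlinear {V W : Type*} [AddGroup V] [AddGroup W] (f : V → W) : Prop :=
  ∀ a : V, a ≠ 0 → ∀ b : W, ∃! x : V, f (x + a) - f x = b

theorem IsPerfectNonlinear.eq_or_eq_of_add_eq_add {V W : Type*} [AddCommGroup V]
    [AddCommGroup W] {f : V → W} (hf : IsPerfectNonlinear f) {x₁ x₂ y₁ y₂ : V}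
    (hx : x₁ + x₂ = y₁ + y₂) (hfx : f x₁ + f x₂ = f y₁ + f y₂) : x₁ = y₁ ∨ x₂ = y₁ := by
  refine or_iff_not_imp_left.2 fun h =>
    (hf (x₁ - y₁) (sub_ne_zero.2 h) (f x₁ - f y₁)).unique ?_ ?_
  · rw [show x₂ + (x₁ - y₁) = y₂ by rw [← add_sub_assoc, add_comm, hx, add_sub_cancel_left],
      sub_eq_sub_iff_add_eq_add, hfx, add_comm]
  · rw [add_sub_cancel]

theorem exists_pair_of_three_lt_card {V : Type*} [AddGroup V] [Fintype V]
    (hV : 3 < Fintype.card V) : ∃ u v : V, u ≠ 0 ∧ v ≠ 0 ∧ u ≠ v ∧ u + v ≠ 0 := by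
  have : Nontrivial V := Fintype.one_lt_card_iff_nontrivial.1 (by omega)
  obtain ⟨u, hu⟩ := exists_ne (0 : V)
  obtain ⟨v, -, hv⟩ := exists_mem_notMem_of_card_lt_card
    ((card_le_three (a := 0) (b := u) (c := -u)).trans_lt hV)
  simp only [mem_insert, mem_singleton, not_or] at hv
  exact ⟨u, v, hu, hv.1, Ne.symm hv.2.1, fun h => hv.2.2 (eq_neg_of_add_eq_zero_right h)⟩

namespace IsPerfectNonlinear

variable {R V W : Type*} [CommRing R] [AddCommGroup V] [AddCommGroup W] [Module R V]
  [Module R W] {Q : QuadraticMap R V W}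

theorem polar_left_bijective (hQ : IsPerfectNonlinear Q) {a : V} (ha : a ≠ 0) :
    Function.Bijective (polar Q · a) := by
  refine Function.bijective_iff_existsUnique _ |>.2 fun b => ?_
  convert hQ a ha (b + Q a) using 2 with x
  rw [QuadraticMap.map_add Q x a, add_assoc, add_sub_cancel_left, add_comm, add_left_inj]

theorem polar_eq_zero_iff (hQ : IsPerfectNonlinear Q) {a x : V} (ha : a ≠ 0) :
    polar Q x a = 0 ↔ x = 0 :=
  ⟨fun h => (hQ.polar_left_bijective ha).1 (h.trans (Q.polar_zero_left a).symm),
    fun h => h ▸ Q.polar_zero_left a⟩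

theorem anisotropic (hQ : IsPerfectNonlinear Q) : Q.Anisotropic := fun x hx => by
  by_contra hne
  exact hne ((hQ.polar_eq_zero_iff hne).1 (by rw [polar_self, hx, smul_zero]))

theorem eq_zero_or_eq_zero_of_map_add (hQ : IsPerfectNonlinear Q) {x y : V}
    (h : Q (x + y) = Q x + Q y) : x = 0 ∨ y = 0 :=
  or_iff_not_imp_right.2 fun hy => (hQ.polar_eq_zero_iff hy).1 (by simp [polar, h])

end IsPerfectNonlinear

section SignedIndicator

variable {ι R : Type*} [Fintype ι] [Ring R]

def signedIndicator (P N : Finset ι) (i : ι) : R :=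
  (if i ∈ P then 1 else 0) - if i ∈ N then 1 else 0

theorem sum_signedIndicator_smul {V : Type*} [AddCommGroup V] [Module R V] (P N : Finset ι)
    (g : ι → V) : ∑ i, (signedIndicator P N i : R) • g i = ∑ i ∈ P, g i - ∑ i ∈ N, g i := by
  simp [signedIndicator, sub_smul, ite_smul, sum_sub_distrib]

theorem sum_signedIndicator (P N : Finset ι) :
    ∑ i, (signedIndicator P N i : R) = #P - #N := by
  simpa using sum_signedIndicator_smul (R := R) P N (fun _ => (1 : R))

theorem hammingNorm_signedIndicator [Nontrivial R] [DecidableEq R] {P N : Finset ι}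
    (h : Disjoint P N) : hammingNorm (signedIndicator P N : ι → R) = #P + #N := by
  rw [hammingNorm, ← card_union_of_disjoint h]
  congr 1
  ext i
  have := fun hP : i ∈ P => disjoint_left.1 h hP
  rw [mem_filter, mem_union]
  by_cases hP : i ∈ P <;> by_cases hN : i ∈ N <;> simp_all [signedIndicator]

theorem exists_signedIndicator_eq (v : ι → ZMod 3) :
    ∃ P N : Finset ι, Disjoint P N ∧ signedIndicator P N = v := by
  refine ⟨({i | v i = 1} : Finset ι), ({i | v i = -1} : Finset ι),
    disjoint_filter.2 fun i _ h₁ h₂ => ?_, funext fun i => ?_⟩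
  · exact absurd (h₁.symm.trans h₂) (by decide)
  · simp only [signedIndicator, mem_filter, mem_univ, true_and]
    generalize v i = r
    revert r
    decide

end SignedIndicator

section Ternary

variable {V W : Type*} [AddCommGroup V] [AddCommGroup W] [Module (ZMod 3) V]
  [Module (ZMod 3) W] {Q : QuadraticMap (ZMod 3) V W}

theorem QuadraticMap.Anisotropic.eq_of_add_add_eq_zero (hQ : Q.Anisotropic) {x y z : V}
    (h : x + y + z = 0) (hQxyz : Q x + Q y + Q z = 0) : x = y := by
  obtain rfl : z = -(x + y) := eq_neg_of_add_eq_zero_right h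
  refine sub_eq_zero.1 (hQ _ ?_)
  rw [QuadraticMap.map_neg] at hQxyz
  calc Q (x - y) = 3 • (Q x + Q y) - (Q x + Q y + Q (x + y)) := by
        rw [sub_eq_add_neg, QuadraticMap.map_add Q x, QuadraticMap.map_add Q x,
          polar_neg_right, QuadraticMap.map_neg]
        abel
    _ = 0 := by rw [ZModModule.char_nsmul_eq_zero, hQxyz, sub_zero]

theorem QuadraticMap.Anisotropic.card_ne_three (hQ : Q.Anisotropic) {S : Finset V}
    (hS : ∑ x ∈ S, x = 0) (hQS : ∑ x ∈ S, Q x = 0) : #S ≠ 3 := by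
  intro h
  obtain ⟨x, y, z, hxy, hxz, hyz, rfl⟩ := card_eq_three.1 h
  rw [sum_insert (by simp [hxy, hxz]), sum_pair hyz, ← add_assoc] at hS hQS
  exact hxy (hQ.eq_of_add_add_eq_zero hS hQS)

namespace IsPerfectNonlinear

theorem eq_zero_or_eq_of_map_add_add_self (hQ : IsPerfectNonlinear Q) {x y : V}
    (h : Q (x + x + y) = Q x + Q x + Q y) : x = 0 ∨ x = y := by
  have hxy : x + x + y = y - x := by
    rw [← sub_eq_zero, show x + x + y - (y - x) = 3 • x by abel,
      ZModModule.char_nsmul_eq_zero]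
  have hQxy : Q x + Q x + Q y = Q y - Q x := by
    rw [← sub_eq_zero, show Q x + Q x + Q y - (Q y - Q x) = 3 • Q x by abel,
      ZModModule.char_nsmul_eq_zero]
  rw [hxy, hQxy] at h
  have := hQ.eq_zero_or_eq_zero_of_map_add (x := y - x) (y := x)
    (by rw [sub_add_cancel, h, sub_add_cancel])
  rw [sub_eq_zero] at this
  exact this.symm.imp id Eq.symm

theorem exists_nodup_map_add_add (hQ : IsPerfectNonlinear Q) {u v : V}
    (hu : u ≠ 0) (hv : v ≠ 0) (huv : u ≠ v) (huv' : u + v ≠ 0) :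
    ∃ w, [0, u, v, w, u + v + w].Nodup ∧ Q (u + v + w) = Q u + Q v + Q w := by
  obtain ⟨w, hw : polar Q w (u + v) = -polar Q u v⟩ :=
    (hQ.polar_left_bijective huv').2 (-polar Q u v)
  have hQw : Q (u + v + w) = Q u + Q v + Q w := by
    rw [QuadraticMap.map_add Q (u + v), QuadraticMap.map_add Q u, polar_comm Q (u + v), hw]
    abel
  refine ⟨w, ?_, hQw⟩
  have hw0 : w ≠ 0 := by
    rintro rfl
    exact (hQ.eq_zero_or_eq_zero_of_map_add (by simpa using hQw)).elim hu hv
  have hwu : w ≠ u := by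
    rintro rfl
    simpa [hu, huv] using hQ.eq_zero_or_eq_of_map_add_add_self (x := w) (y := v)
      (by rw [add_right_comm, hQw]; abel)
  have hwv : w ≠ v := by
    rintro rfl
    simpa [hv, huv.symm] using hQ.eq_zero_or_eq_of_map_add_add_self (x := w) (y := u)
      (by rw [add_comm, ← add_assoc, hQw]; abel)
  have hs0 : u + v + w ≠ 0 := fun h =>
    huv (hQ.anisotropic.eq_of_add_add_eq_zero h (by rw [← hQw, h, map_zero]))
  have hsu : u + v + w ≠ u := fun h =>
    hv <| hQ.anisotropic.eq_of_add_add_eq_zero (x := v) (y := 0) (z := w)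
      (by rwa [add_zero, ← add_eq_left (a := u), ← add_assoc])
      (by rw [map_zero, add_zero, ← left_eq_add (a := Q u), ← add_assoc, ← hQw, h])
  have hsv : u + v + w ≠ v := fun h =>
    hu <| hQ.anisotropic.eq_of_add_add_eq_zero (x := u) (y := 0) (z := w)
      (by rwa [add_zero, ← add_eq_right (b := v), add_right_comm])
      (by rw [map_zero, add_zero, ← right_eq_add (b := Q v), add_right_comm, ← hQw, h])
  have hsw : u + v + w ≠ w := fun h => huv' (by simpa using h)
  simp [hu.symm, hv.symm, huv, hw0.symm, hwu.symm, hwv.symm, hs0.symm, hsu.symm, hsv.symm,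
    hsw.symm]

theorem five_le_card_add_card (hQ : IsPerfectNonlinear Q) {P N : Finset V}
    (hdisj : Disjoint P N) (hpos : 0 < #P + #N) (hcard : (#P : ZMod 3) = #N)
    (hsum : ∑ x ∈ P, x = ∑ x ∈ N, x) (hQsum : ∑ x ∈ P, Q x = ∑ x ∈ N, Q x) :
    5 ≤ #P + #N := by
  by_contra! hlt
  have hmod := (ZMod.natCast_eq_natCast_iff _ _ _).1 hcard
  obtain ⟨hP, hN⟩ | ⟨hP, hN⟩ | ⟨hP, hN⟩ | ⟨hP, hN⟩ :
      (#P = 1 ∧ #N = 1) ∨ (#P = 2 ∧ #N = 2) ∨ (#P = 3 ∧ #N = 0) ∨ (#P = 0 ∧ #N = 3) := by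
    have : #P < 5 := by omega
    have : #N < 5 := by omega
    unfold Nat.ModEq at hmod
    interval_cases #P <;> interval_cases #N <;> simp_all
  · obtain ⟨x, rfl⟩ := card_eq_one.1 hP
    obtain ⟨y, rfl⟩ := card_eq_one.1 hN
    simp_all
  · obtain ⟨x₁, x₂, hx, rfl⟩ := card_eq_two.1 hP
    obtain ⟨y₁, y₂, hy, rfl⟩ := card_eq_two.1 hN
    rw [sum_pair hx, sum_pair hy] at hsum hQsum
    rcases hQ.eq_or_eq_of_add_eq_add hsum hQsum with rfl | rfl <;> simp at hdisj
  · rw [card_eq_zero.1 hN, sum_empty] at hsum hQsum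
    exact hQ.anisotropic.card_ne_three hsum hQsum hP
  · rw [card_eq_zero.1 hP, sum_empty] at hsum hQsum
    exact hQ.anisotropic.card_ne_three hsum.symm hQsum.symm hN

theorem five_le_hammingNorm [Fintype V] (hQ : IsPerfectNonlinear Q) {v : V → ZMod 3}
    (hv : v ≠ 0) (h₀ : ∑ x, v x = 0) (h₁ : ∑ x, v x • x = 0) (h₂ : ∑ x, v x • Q x = 0) :
    5 ≤ hammingNorm v := by
  obtain ⟨P, N, hdisj, rfl⟩ := exists_signedIndicator_eq v
  rw [sum_signedIndicator, sub_eq_zero] at h₀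
  rw [sum_signedIndicator_smul, sub_eq_zero] at h₁ h₂
  rw [← hammingNorm_pos_iff, hammingNorm_signedIndicator hdisj] at hv
  rw [hammingNorm_signedIndicator hdisj]
  exact hQ.five_le_card_add_card hdisj hv h₀ h₁ h₂

theorem exists_hammingNorm_eq_five [Fintype V] (hQ : IsPerfectNonlinear Q)
    (hV : 3 < Fintype.card V) :
    ∃ v : V → ZMod 3, hammingNorm v = 5 ∧
      ∑ x, v x = 0 ∧ ∑ x, v x • x = 0 ∧ ∑ x, v x • Q x = 0 := by
  obtain ⟨u, v, hu, hv, huv, huv'⟩ := exists_pair_of_three_lt_card hV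
  obtain ⟨w, hnodup, hQw⟩ := hQ.exists_nodup_map_add_add hu hv huv huv'
  obtain ⟨hP, -, hPN⟩ :=
    List.nodup_append.1 (show ([0, u, v, w] ++ [u + v + w]).Nodup from hnodup)
  have hdisj : Disjoint [0, u, v, w].toFinset {u + v + w} := disjoint_singleton_right.2 fun h =>
    hPN _ (List.mem_toFinset.1 h) _ (List.mem_singleton_self _) rfl
  refine ⟨signedIndicator [0, u, v, w].toFinset {u + v + w}, ?_, ?_, ?_, ?_⟩
  · rw [hammingNorm_signedIndicator hdisj, List.toFinset_card_of_nodup hP, card_singleton]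
    rfl
  · rw [sum_signedIndicator, List.toFinset_card_of_nodup hP, card_singleton,
      List.length_cons, List.length_cons, List.length_cons, List.length_singleton]
    rfl
  · rw [sum_signedIndicator_smul, List.sum_toFinset _ hP, sum_singleton]
    simp only [List.map, List.sum_cons, List.sum_nil]
    abel
  · rw [sum_signedIndicator_smul, List.sum_toFinset _ hP, sum_singleton, hQw]
    simp only [List.map, List.sum_cons, List.sum_nil, map_zero]
    abel

end IsPerfectNonlinear

end Ternary

section DO

variable (p : ℕ) [Fact p.Prime] {K : Type*} [CommRing K] [Algebra (ZMod p) K]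

def doQuadraticMap {n : ℕ} (δ : Fin n → Fin n → K) : QuadraticMap (ZMod p) K K :=
  ∑ i, ∑ j, δ i j • QuadraticMap.linMulLin
    ((FiniteField.frobeniusAlgHom (ZMod p) K) ^ (i : ℕ)).toLinearMap
    ((FiniteField.frobeniusAlgHom (ZMod p) K) ^ (j : ℕ)).toLinearMap

theorem doQuadraticMap_apply {n : ℕ} (δ : Fin n → Fin n → K) (x : K) :
    doQuadraticMap p δ x = ∑ i, ∑ j, δ i j * x ^ (p ^ (i : ℕ) + p ^ (j : ℕ)) := by
  simp [doQuadraticMap, AlgHom.coe_pow, FiniteField.coe_frobeniusAlgHom, pow_iterate, ZMod.card,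
    pow_add]

end DO

section Code

variable {p m : ℕ} [Fact p.Prime]

theorem eq_zero_of_forall_tr_mul_eq_zero {a : GaloisField p m} (h : ∀ y, tr p m (a * y) = 0) :
    a = 0 :=
  (traceForm_nondegenerate (ZMod p) (GaloisField p m)).1 a h

theorem exists_tr_mul_eq (φ : GaloisField p m →ₗ[ZMod p] ZMod p) :
    ∃ a, ∀ y, φ y = tr p m (a * y) := by
  obtain ⟨a, rfl⟩ := (LinearMap.BilinForm.toDual _
    (traceForm_nondegenerate (ZMod p) (GaloisField p m))).surjective φ
  exact ⟨a, fun y => rfl⟩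

theorem sum_mul_pWord (f : GaloisField p m → GaloisField p m) (v : GaloisField p m → ZMod p)
    (a b : GaloisField p m) (c : ZMod p) :
    ∑ x, v x * pWord p m f a b c x =
      tr p m (a * ∑ x, v x • f x + b * ∑ x, v x • x) + (∑ x, v x) * c := by
  simp only [pWord, tr, mul_add, sum_add_distrib, mul_sum, sum_mul, map_add, map_sum,
    mul_smul_comm, map_smul, smul_eq_mul]

theorem mem_pDual_iff {f : GaloisField p m → GaloisField p m} {v : GaloisField p m → ZMod p} :
    v ∈ pDual p m f ↔ ∑ x, v x • f x = 0 ∧ ∑ x, v x • x = 0 ∧ ∑ x, v x = 0 := by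
  simp only [pDual, Set.mem_ofPred_eq, sum_mul_pWord]
  refine ⟨fun h => ?_, fun ⟨h₂, h₁, h₀⟩ a b c => by simp [h₀, h₁, h₂, tr]⟩
  have h₀ : ∑ x, v x = 0 := by simpa [tr] using h 0 0 1
  refine ⟨eq_zero_of_forall_tr_mul_eq_zero fun a => ?_,
    eq_zero_of_forall_tr_mul_eq_zero fun b => ?_, h₀⟩
  · simpa [mul_comm] using h a 0 0
  · simpa [mul_comm] using h 0 b 0

def checkMap (f : GaloisField p m → GaloisField p m) :
    (GaloisField p m → ZMod p) →ₗ[ZMod p] GaloisField p m × GaloisField p m × ZMod p :=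
  (Fintype.linearCombination (ZMod p) f).prod
    ((Fintype.linearCombination (ZMod p) id).prod (Fintype.linearCombination (ZMod p) 1))

theorem pDual_eq_ker (f : GaloisField p m → GaloisField p m) :
    pDual p m f = LinearMap.ker (checkMap f) := by
  ext v
  simp [mem_pDual_iff, checkMap, Fintype.linearCombination_apply]

theorem checkMap_surjective {f : GaloisField p m → GaloisField p m}
    (hf : ∀ a b c, pWord p m f a b c = 0 → a = 0 ∧ b = 0 ∧ c = 0) :
    Function.Surjective (checkMap f) := by
  rw [← LinearMap.dualMap_injective_iff, injective_iff_map_eq_zero]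
  intro φ hφ
  obtain ⟨a, ha⟩ := exists_tr_mul_eq (φ ∘ₗ LinearMap.inl _ _ _)
  obtain ⟨b, hb⟩ := exists_tr_mul_eq (φ ∘ₗ LinearMap.inr _ _ _ ∘ₗ LinearMap.inl _ _ _)
  have hφ_apply (s t : GaloisField p m) (u : ZMod p) :
      φ (s, t, u) = tr p m (a * s) + tr p m (b * t) + u * φ (0, 0, 1) := by
    have : ((s, t, u) : GaloisField p m × GaloisField p m × ZMod p) =
        (s, 0, 0) + (0, t, 0) + u • (0, 0, 1) := by simp
    rw [this, map_add, map_add, map_smul, smul_eq_mul]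
    exact congr_arg₂ (· + · + _) (ha s) (hb t)
  obtain ⟨rfl, rfl, hc⟩ := hf a b (φ (0, 0, 1)) <| funext fun x => by
    have hx : checkMap f (Pi.single x 1) = (f x, x, 1) := by
      simp [checkMap, Fintype.linearCombination_apply_single]
    have := LinearMap.congr_fun hφ (Pi.single x 1)
    rw [LinearMap.dualMap_apply, hx, hφ_apply, one_mul] at this
    simpa only [pWord, tr, map_add, LinearMap.zero_apply, Pi.zero_apply] using this
  refine LinearMap.ext fun ⟨s, t, u⟩ => ?_
  rw [hφ_apply, hc, zero_mul, zero_mul, mul_zero]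
  simp only [tr, map_zero, add_zero, LinearMap.zero_apply]

theorem ncard_pDual {f : GaloisField p m → GaloisField p m} (hm : m ≠ 0)
    (hf : Function.Surjective (checkMap f)) :
    (pDual p m f).ncard = p ^ (p ^ m - 2 * m - 1) := by
  have hrank := LinearMap.finrank_range_add_finrank_ker (checkMap f)
  rw [LinearMap.range_eq_top.2 hf, finrank_top, Module.finrank_prod, Module.finrank_prod,
    Module.finrank_self, GaloisField.finrank p hm, Module.finrank_fintype_fun_eq_card,
    Fintype.card_eq_nat_card, GaloisField.card p m hm] at hrank
  rw [pDual_eq_ker, ← Nat.card_coe_set_eq, SetLike.coe_sort_coe,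
    Module.natCard_eq_pow_finrank (K := ZMod p), Nat.card_zmod]
  congr 1
  omega

theorem IsPerfectNonlinear.eq_zero_of_pWord_eq_zero
    {Q : QuadraticMap (ZMod p) (GaloisField p m) (GaloisField p m)} (hQ : IsPerfectNonlinear Q)
    {a b : GaloisField p m} {c : ZMod p} (h : pWord p m Q a b c = 0) :
    a = 0 ∧ b = 0 ∧ c = 0 := by
  have hx (x : GaloisField p m) : tr p m (a * Q x + b * x) + c = 0 := congr_fun h x
  have hc : c = 0 := by simpa [tr] using hx 0
  have hpolar (x y : GaloisField p m) : tr p m (a * polar Q x y) = 0 := by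
    have h₁ := hx (x + y)
    have h₂ := hx x
    have h₃ := hx y
    have e : a * polar Q x y =
        (a * Q (x + y) + b * (x + y)) - (a * Q x + b * x) - (a * Q y + b * y) := by
      rw [polar]; ring
    simp only [tr] at h₁ h₂ h₃ ⊢
    rw [e, map_sub, map_sub]
    linear_combination h₁ - h₂ - h₃ + hc
  obtain ⟨y, hy⟩ := exists_ne (0 : GaloisField p m)
  have ha : a = 0 := eq_zero_of_forall_tr_mul_eq_zero fun z => by
    obtain ⟨x, rfl⟩ := (hQ.polar_left_bijective hy).2 z
    exact hpolar x y
  refine ⟨ha, eq_zero_of_forall_tr_mul_eq_zero fun x => ?_, hc⟩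
  simpa [ha, hc] using hx x

end Code

/-- For `p = 3`, `m > 1` and `f` a PN-DO function on `F_{3^m}`,
the dual `C̄_f^⊥` of the punctured code is a ternary `[3^m, 3^m−2m−1, 5]` code:
it has `3^(3^m−2m−1)` elements (dimension `3^m − 2m − 1`) and minimum Hamming
distance exactly `5`. -/
theorem stmt_10 (m : ℕ) (hm : 1 < m)
    (f : GaloisField 3 m → GaloisField 3 m)
    (hPN : ∀ a : GaloisField 3 m, a ≠ 0 → ∀ b : GaloisField 3 m,
      ∃! x : GaloisField 3 m, f (x + a) - f x = b)
    (δ : Fin m → Fin m → GaloisField 3 m)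
    (hDO : ∀ x, f x = ∑ i : Fin m, ∑ j : Fin m, δ i j * x ^ (3 ^ (i : ℕ) + 3 ^ (j : ℕ))) :
    Set.ncard (pDual 3 m f) = 3 ^ (3 ^ m - 2 * m - 1) ∧
    (∀ v ∈ pDual 3 m f, v ≠ 0 → 5 ≤ hammingNorm v) ∧
    (∃ v ∈ pDual 3 m f, hammingNorm v = 5) := by
  obtain ⟨Q, rfl⟩ : ∃ Q : QuadraticMap (ZMod 3) (GaloisField 3 m) (GaloisField 3 m), ⇑Q = f :=
    ⟨doQuadraticMap 3 δ, funext fun x => (doQuadraticMap_apply 3 δ x).trans (hDO x).symm⟩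
  have hQ : IsPerfectNonlinear Q := hPN
  have hm0 : m ≠ 0 := by omega
  refine ⟨ncard_pDual hm0 (checkMap_surjective fun _ _ _ => hQ.eq_zero_of_pWord_eq_zero),
    fun v hv hv0 => ?_, ?_⟩
  · obtain ⟨h₂, h₁, h₀⟩ := mem_pDual_iff.1 hv
    exact hQ.five_le_hammingNorm hv0 h₀ h₁ h₂
  · have hcard : 3 < Fintype.card (GaloisField 3 m) := by
      rw [Fintype.card_eq_nat_card, GaloisField.card 3 m hm0]
      exact lt_of_lt_of_le (by norm_num) (Nat.pow_le_pow_right (by norm_num) hm)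
    obtain ⟨v, hv, h₀, h₁, h₂⟩ := hQ.exists_hammingNorm_eq_five hcard
    exact ⟨v, mem_pDual_iff.2 ⟨h₂, h₁, h₀⟩, hv⟩
end
end
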